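/- Let n ≥ 1. There exist constants C > 0 and c > 0 such that for every k ∈ ℕ and every λ > 3ν (where ν = 4k+2n), one has |χ̂_B(λ,k) − (−1)^k·(sin λ/λ^{n+1})·2^{(3n+1)/2}| ≤ C·(|sin λ|/λ^{n+1})·ν^{−(n−1)/2}·λ^{n/2−1}·e^{−cλ}. -/

import Mathlib

open MeasureTheory Complex

noncomputable section

/-- The generalized Laguerre polynomials
`L_k^δ(t) = t^{−δ} e^t (1/k!) (d/dt)^k (e^{−t} t^{k+δ})`. -/
def genLaguerre (k : ℕ) (δ : ℝ) (t : ℝ) : ℝ :=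
  t ^ (-δ) * Real.exp t * ((k.factorial : ℝ))⁻¹ *
    iteratedDeriv k (fun s => Real.exp (-s) * s ^ ((k : ℝ) + δ)) t

/-- The normalizing constant `r_k = (k!/(n+k−1)!)^{1/2}`. -/
def rk (n k : ℕ) : ℝ := Real.sqrt ((k.factorial : ℝ) / ((n + k - 1).factorial : ℝ))

/-- The Laguerre functions `Λ_k^{n−1}(t) = r_k L_k^{n−1}(t) e^{−t/2} t^{(n−1)/2}`. -/
def lagFun (n k : ℕ) (t : ℝ) : ℝ :=
  rk n k * genLaguerre k ((n : ℝ) - 1) t * Real.exp (-t / 2) * t ^ (((n : ℝ) - 1) / 2)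

/-- The radial Fourier coefficient
`f̂(λ,k) = r_k ∫₀^∞ f_#^λ(r) (|λ|r²)^{(1−n)/2} Λ_k^{n−1}(|λ|r²/2) r^{2n−1} dr`,
where `f_#^λ(r) = ∫_ℝ f_#(r,t) e^{iλt} dt`. -/
def radialCoeff (n : ℕ) (fsharp : ℝ → ℝ → ℂ) (lam : ℝ) (k : ℕ) : ℂ :=
  (rk n k : ℂ) * ∫ r in Set.Ioi (0 : ℝ),
    (∫ t : ℝ, fsharp r t * Complex.exp (Complex.I * (lam : ℂ) * (t : ℂ))) *
      (((|lam| * r ^ 2) ^ ((1 - (n : ℝ)) / 2) : ℝ) : ℂ) *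
      ((lagFun n k (|lam| * r ^ 2 / 2) : ℝ) : ℂ) *
      ((r ^ (2 * (n : ℝ) - 1) : ℝ) : ℂ)

/-- `ν = 4k + 2n`. -/
def nuv (n k : ℕ) : ℕ := 4 * k + 2 * n

/-- The radial Fourier coefficient of the indicator of `B = {(z,t) : |z| ≤ 1, |t| ≤ 1}`:
`χ̂_B(λ,k) = r_k (sin λ/λ^{n+1}) (2ν)^{(n+1)/2} ∫₀^{λ/(2ν)} Λ_k^{n−1}(νt) t^{(n−1)/2} dt`. -/
def chiHatB (n k : ℕ) (lam : ℝ) : ℝ :=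
  rk n k * (Real.sin lam / lam ^ (n + 1)) *
    (2 * (nuv n k : ℝ)) ^ (((n : ℝ) + 1) / 2) *
    ∫ t in (0 : ℝ)..(lam / (2 * (nuv n k : ℝ))),
      lagFun n k ((nuv n k : ℝ) * t) * t ^ (((n : ℝ) - 1) / 2)

/-- The Japanese bracket `⟨x⟩ = (1+x²)^{1/2}`. -/
def jap (x : ℝ) : ℝ := Real.sqrt (1 + x ^ 2)

/-!
Substituting `s = ν t` turns `χ̂_B(λ,k)` into
`(sin λ / λ^{n+1}) 2^{(n+1)/2} ((k+n-1)!)⁻¹ ∫₀^{λ/2} W(s) ds` with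
`W(s) = k! L_k^{n-1}(s) e^{-s/2} s^{n-1}`. Expanding `L_k^{n-1}` by Leibniz' rule, every
monomial of `W` integrates over `(0, ∞)` to a Gamma value, and the binomial theorem sums these
to `∫₀^∞ W = (-1)^k 2^n (k+n-1)!`: this is the main term. What remains is the tail
`∫_{λ/2}^∞ W`. Termwise, `s^p e^{-s/2} ≤ 8^p p! e^{-3s/8}`, and the binomial theorem again gives
`|W(s)| ≤ 8^{n-1} 9^k (k+n-1)! e^{-3s/8}`, so the tail is `O(9^k e^{-3λ/16})`. As
`λ > 3ν ≥ 12k` and `log 9 < 11/5`, `9^k e^{-3λ/16} ≤ e^{-λ/240}`, which absorbs `λ^{1/2}` and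
leaves `e^{-λ/480}`; finally `λ^{-(n-1)/2} ≤ ν^{-(n-1)/2}`.
-/
open Set Finset
open scoped Nat

lemma iteratedDeriv_exp_neg_mul_pow (m k : ℕ) (t : ℝ) :
    iteratedDeriv k (fun s => Real.exp (-s) * s ^ m) t =
      Real.exp (-t) * ∑ i ∈ range (k + 1),
        (-1) ^ i * ((k.choose i * m.descFactorial (k - i) : ℕ) : ℝ) * t ^ (m - (k - i)) := by
  have hexp : (fun s : ℝ => Real.exp (-s)) = fun s => Real.exp (-1 * s) := by simp
  rw [iteratedDeriv_fun_mul (by fun_prop) (by fun_prop), mul_sum]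
  refine sum_congr rfl fun i _ => ?_
  rw [hexp, iteratedDeriv_exp_const_mul, iteratedDeriv_pow]
  push_cast
  rw [neg_one_mul]
  ring

def laguerreCoeff (d k i : ℕ) : ℕ := k.choose i * (k + d).descFactorial (k - i)

lemma genLaguerre_natCast_eq_sum (d k : ℕ) {t : ℝ} (ht : t ≠ 0) :
    genLaguerre k d t =
      (k ! : ℝ)⁻¹ * ∑ i ∈ range (k + 1), (-1) ^ i * (laguerreCoeff d k i : ℝ) * t ^ i := by
  have hpow : (fun s : ℝ => Real.exp (-s) * s ^ ((k : ℝ) + d)) =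
      fun s => Real.exp (-s) * s ^ (k + d) := by
    funext s; rw [← Nat.cast_add, Real.rpow_natCast]
  rw [genLaguerre, hpow, iteratedDeriv_exp_neg_mul_pow, ← Int.cast_natCast d, ← Int.cast_neg,
    Real.rpow_intCast, mul_sum, mul_sum, mul_sum]
  refine sum_congr rfl fun i hi => ?_
  have hd : k + d - (k - i) = d + i := by have := mem_range.1 hi; omega
  rw [hd, pow_add, zpow_neg, zpow_natCast, laguerreCoeff]
  field_simp
  rw [mul_comm (Real.exp t), ← Real.exp_add]
  simp

lemma integral_pow_mul_exp_neg_half (p : ℕ) :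
    ∫ s in Ioi (0 : ℝ), s ^ p * Real.exp (-s / 2) = p ! * 2 ^ (p + 1) := by
  have h := Real.integral_rpow_mul_exp_neg_mul_Ioi (a := p + 1) (r := 1 / 2)
    (by positivity) (by norm_num)
  rw [add_sub_cancel_right, Real.Gamma_nat_eq_factorial, ← Nat.cast_succ, Real.rpow_natCast,
    one_div_one_div] at h
  simp only [Real.rpow_natCast] at h
  rw [mul_comm, ← h]
  refine setIntegral_congr_fun measurableSet_Ioi fun s _ => ?_
  ring_nf

lemma pow_mul_exp_neg_half_le (p : ℕ) {s : ℝ} (hs : 0 ≤ s) :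
    s ^ p * Real.exp (-s / 2) ≤ 8 ^ p * p ! * Real.exp (-(3 / 8) * s) := by
  have h := Real.pow_div_factorial_le_exp (x := s / 8) (by positivity) p
  rw [div_pow, div_div, div_le_iff₀ (by positivity)] at h
  calc s ^ p * Real.exp (-s / 2) ≤ Real.exp (s / 8) * (8 ^ p * p !) * Real.exp (-s / 2) := by
        gcongr
    _ = 8 ^ p * p ! * Real.exp (-(3 / 8) * s) := by
        rw [mul_comm (Real.exp _), mul_assoc, ← Real.exp_add]; ring_nf

lemma integrableOn_pow_mul_exp_neg_half (p : ℕ) :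
    IntegrableOn (fun s : ℝ => s ^ p * Real.exp (-s / 2)) (Ioi 0) := by
  refine ((exp_neg_integrableOn_Ioi 0 (b := 3 / 8) (by norm_num)).const_mul (8 ^ p * p !)).mono'
    (by fun_prop) (ae_restrict_of_forall_mem measurableSet_Ioi fun s (hs : 0 < s) => ?_)
  rw [Real.norm_of_nonneg (by positivity)]
  exact pow_mul_exp_neg_half_le p hs.le

lemma laguerreCoeff_mul_factorial {d k i : ℕ} (hi : i ≤ k) :
    laguerreCoeff d k i * (d + i)! = k.choose i * (k + d)! := by
  rw [laguerreCoeff, mul_assoc, mul_comm _ (d + i)!,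
    ← Nat.factorial_mul_descFactorial (by omega : k - i ≤ k + d),
    show k + d - (k - i) = d + i by omega]

lemma sum_laguerreCoeff_mul_factorial (d k : ℕ) (x : ℝ) :
    ∑ i ∈ range (k + 1), (laguerreCoeff d k i : ℝ) * (d + i)! * x ^ i =
      (k + d)! * (x + 1) ^ k := by
  rw [add_pow, mul_sum]
  refine sum_congr rfl fun i hi => ?_
  have h : (laguerreCoeff d k i : ℝ) * (d + i)! = k.choose i * (k + d)! := mod_cast
    laguerreCoeff_mul_factorial (Nat.lt_succ_iff.1 (mem_range.1 hi))
  rw [h, one_pow]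
  ring

def laguerreWeight (d k : ℕ) (s : ℝ) : ℝ :=
  ∑ i ∈ range (k + 1),
    (-1) ^ i * (laguerreCoeff d k i : ℝ) * (s ^ (d + i) * Real.exp (-s / 2))

lemma laguerreWeight_eq (d k : ℕ) {s : ℝ} (hs : s ≠ 0) :
    laguerreWeight d k s = k ! * genLaguerre k d s * Real.exp (-s / 2) * s ^ d := by
  rw [genLaguerre_natCast_eq_sum d k hs, laguerreWeight, mul_inv_cancel_left₀ (by positivity),
    sum_mul, sum_mul]
  refine sum_congr rfl fun i _ => ?_
  ring

lemma integrableOn_laguerreWeight (d k : ℕ) : IntegrableOn (laguerreWeight d k) (Ioi 0) :=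
  integrable_finsetSum _ fun i _ => (integrableOn_pow_mul_exp_neg_half (d + i)).const_mul _

lemma integral_laguerreWeight (d k : ℕ) :
    ∫ s in Ioi 0, laguerreWeight d k s = (-1) ^ k * 2 ^ (d + 1) * (k + d)! := by
  simp only [laguerreWeight]
  rw [integral_finsetSum _ fun i _ => (integrableOn_pow_mul_exp_neg_half (d + i)).const_mul _]
  simp only [integral_const_mul, integral_pow_mul_exp_neg_half]
  calc _ = 2 ^ (d + 1) *
        ∑ i ∈ range (k + 1), (laguerreCoeff d k i : ℝ) * (d + i)! * (-2) ^ i := by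
        rw [mul_sum]
        refine sum_congr rfl fun i _ => ?_
        rw [neg_pow (2 : ℝ)]
        ring
    _ = _ := by
        rw [sum_laguerreCoeff_mul_factorial]
        norm_num
        ring

lemma abs_laguerreWeight_le (d k : ℕ) {s : ℝ} (hs : 0 ≤ s) :
    |laguerreWeight d k s| ≤ 8 ^ d * 9 ^ k * (k + d)! * Real.exp (-(3 / 8) * s) := by
  calc |laguerreWeight d k s|
      ≤ ∑ i ∈ range (k + 1),
          (laguerreCoeff d k i : ℝ) * (s ^ (d + i) * Real.exp (-s / 2)) := by
        refine (abs_sum_le_sum_abs _ _).trans (sum_le_sum fun i _ => ?_)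
        rw [abs_mul, abs_mul, abs_pow, abs_neg, abs_one, one_pow, one_mul, Nat.abs_cast,
          abs_of_nonneg (by positivity)]
    _ ≤ ∑ i ∈ range (k + 1),
          (laguerreCoeff d k i : ℝ) * (8 ^ (d + i) * (d + i)! * Real.exp (-(3 / 8) * s)) :=
        sum_le_sum fun i _ =>
          mul_le_mul_of_nonneg_left (pow_mul_exp_neg_half_le _ hs) (by positivity)
    _ = 8 ^ d * Real.exp (-(3 / 8) * s) *
          ∑ i ∈ range (k + 1), (laguerreCoeff d k i : ℝ) * (d + i)! * 8 ^ i := by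
        rw [mul_sum]
        refine sum_congr rfl fun i _ => ?_
        ring
    _ = _ := by
        rw [sum_laguerreCoeff_mul_factorial]
        ring

lemma abs_integral_Ioi_laguerreWeight_le (d k : ℕ) {S : ℝ} (hS : 0 ≤ S) :
    |∫ s in Ioi S, laguerreWeight d k s| ≤
      8 / 3 * 8 ^ d * 9 ^ k * (k + d)! * Real.exp (-(3 / 8) * S) := by
  calc |∫ s in Ioi S, laguerreWeight d k s|
      ≤ ∫ s in Ioi S, 8 ^ d * 9 ^ k * (k + d)! * Real.exp (-(3 / 8) * s) := by
        rw [← Real.norm_eq_abs]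
        exact norm_integral_le_of_norm_le
          ((exp_neg_integrableOn_Ioi S (b := 3 / 8) (by norm_num)).const_mul _)
          (ae_restrict_of_forall_mem measurableSet_Ioi fun s hs =>
            abs_laguerreWeight_le d k (hS.trans (le_of_lt hs)))
    _ = _ := by
        rw [integral_const_mul, integral_exp_mul_Ioi (by norm_num)]
        ring

lemma rk_mul_self (d k : ℕ) : rk (d + 1) k * rk (d + 1) k = k ! / (k + d)! := by
  rw [rk, show d + 1 + k - 1 = k + d by omega]
  exact Real.mul_self_sqrt (by positivity)

lemma lagFun_mul_rpow_eq (d k : ℕ) {ν t : ℝ} (hν : 0 < ν) (ht : 0 < t) :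
    lagFun (d + 1) k (ν * t) * t ^ ((d : ℝ) / 2) =
      rk (d + 1) k / k ! / ν ^ ((d : ℝ) / 2) * laguerreWeight d k (ν * t) := by
  have hsq (x : ℝ) (hx : 0 < x) : x ^ d = x ^ ((d : ℝ) / 2) * x ^ ((d : ℝ) / 2) := by
    rw [← Real.rpow_add hx, add_halves, Real.rpow_natCast]
  rw [lagFun, Nat.cast_succ, add_sub_cancel_right, laguerreWeight_eq d k (by positivity),
    Real.mul_rpow hν.le ht.le, mul_pow, hsq ν hν, hsq t ht]
  field_simp

lemma chiHatB_eq_integral_laguerreWeight (d k : ℕ) {lam : ℝ} (hlam : 0 < lam) :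
    chiHatB (d + 1) k lam = Real.sin lam / lam ^ (d + 2) * 2 ^ (((d : ℝ) + 2) / 2) / (k + d)! *
      ∫ s in 0..lam / 2, laguerreWeight d k s := by
  set ν : ℝ := (nuv (d + 1) k : ℝ)
  have hν : 0 < ν := by simp only [ν, nuv]; positivity
  have hint : ∫ t in 0..lam / (2 * ν), lagFun (d + 1) k (ν * t) * t ^ ((d : ℝ) / 2) =
      rk (d + 1) k / k ! / ν ^ ((d : ℝ) / 2) * ν⁻¹ *
        ∫ s in 0..lam / 2, laguerreWeight d k s := by
    rw [intervalIntegral.integral_congr_ae (g := fun t =>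
        rk (d + 1) k / k ! / ν ^ ((d : ℝ) / 2) * laguerreWeight d k (ν * t)),
      intervalIntegral.integral_const_mul, intervalIntegral.integral_comp_mul_left _ hν.ne',
      mul_zero, show ν * (lam / (2 * ν)) = lam / 2 by field_simp, smul_eq_mul, mul_assoc]
    refine Filter.Eventually.of_forall fun t ht => lagFun_mul_rpow_eq d k hν ?_
    rw [Set.uIoc_of_le (by positivity)] at ht
    exact ht.1
  have h2ν : (2 * ν) ^ (((d : ℝ) + 1 + 1) / 2) =
      2 ^ (((d : ℝ) + 2) / 2) * ν ^ ((d : ℝ) / 2) * ν := by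
    rw [Real.mul_rpow (by norm_num) hν.le, show ((d : ℝ) + 1 + 1) / 2 = d / 2 + 1 by ring,
      Real.rpow_add hν, Real.rpow_one, show (d : ℝ) / 2 + 1 = (d + 2) / 2 by ring]
    ring
  simp only [chiHatB, Nat.cast_add, Nat.cast_one, add_sub_cancel_right]
  rw [hint, h2ν]
  field_simp
  rw [sq, rk_mul_self]
  field_simp

lemma abs_chiHatB_sub_le (d k : ℕ) {lam : ℝ} (hlam : 0 < lam) :
    |chiHatB (d + 1) k lam -
        (-1) ^ k * (Real.sin lam / lam ^ (d + 2)) * 2 ^ ((3 * (d : ℝ) + 4) / 2)| ≤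
      8 / 3 * 2 ^ (((d : ℝ) + 2) / 2) * 8 ^ d * (|Real.sin lam| / lam ^ (d + 2)) *
        (9 ^ k * Real.exp (-(3 / 16) * lam)) := by
  set A := Real.sin lam / lam ^ (d + 2) * 2 ^ (((d : ℝ) + 2) / 2) / (k + d)! with hAdef
  have hmain : (-1) ^ k * (Real.sin lam / lam ^ (d + 2)) * 2 ^ ((3 * (d : ℝ) + 4) / 2) =
      A * ∫ s in Ioi 0, laguerreWeight d k s := by
    rw [integral_laguerreWeight, show (3 * (d : ℝ) + 4) / 2 = (d + 2) / 2 + (d + 1 : ℕ) by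
      push_cast; ring, Real.rpow_add two_pos, Real.rpow_natCast, hAdef]
    field_simp
  have hA : |A| = |Real.sin lam| / lam ^ (d + 2) * 2 ^ (((d : ℝ) + 2) / 2) / (k + d)! := by
    simp only [A, abs_div, abs_mul, abs_pow, abs_of_pos hlam, Nat.abs_cast,
      abs_of_pos (Real.rpow_pos_of_pos two_pos _)]
  rw [chiHatB_eq_integral_laguerreWeight d k hlam, hmain, ← mul_sub,
    ← intervalIntegral.integral_Ioi_sub_Ioi (integrableOn_laguerreWeight d k) (by positivity),
    sub_sub_cancel_left, mul_neg, abs_neg, abs_mul]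
  calc |A| * |∫ s in Ioi (lam / 2), laguerreWeight d k s|
      ≤ |A| * (8 / 3 * 8 ^ d * 9 ^ k * (k + d)! * Real.exp (-(3 / 8) * (lam / 2))) := by
        gcongr
        exact abs_integral_Ioi_laguerreWeight_le d k (by positivity)
    _ = _ := by
        rw [hA, show -(3 / 8) * (lam / 2) = -(3 / 16) * lam by ring]
        field_simp

lemma nine_pow_le_exp (k : ℕ) : (9 : ℝ) ^ k ≤ Real.exp (11 / 5 * k) := by
  have hlog : Real.log 9 ≤ 11 / 5 := by
    rw [show (9 : ℝ) = 3 ^ 2 by norm_num, Real.log_pow]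
    linarith [Real.log_three_lt_d9]
  calc (9 : ℝ) ^ k = Real.exp (k * Real.log 9) := by
        rw [Real.exp_nat_mul, Real.exp_log (by norm_num)]
    _ ≤ Real.exp (11 / 5 * k) :=
        Real.exp_le_exp.2 (by rw [mul_comm]; exact mul_le_mul_of_nonneg_right hlog k.cast_nonneg)

lemma nine_pow_mul_exp_le {k : ℕ} {lam : ℝ} (h1 : 1 ≤ lam) (hk : 12 * k ≤ lam) :
    9 ^ k * Real.exp (-(3 / 16) * lam) ≤
      480 * lam ^ (-(1 : ℝ) / 2) * Real.exp (-(1 / 480) * lam) := by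
  have hsqrt : lam ^ ((1 : ℝ) / 2) ≤ 480 * Real.exp (lam / 480) := by
    calc lam ^ ((1 : ℝ) / 2) ≤ lam ^ (1 : ℝ) :=
          Real.rpow_le_rpow_of_exponent_le h1 (by norm_num)
      _ ≤ 480 * Real.exp (lam / 480) := by
        rw [Real.rpow_one]; linarith [Real.add_one_le_exp (lam / 480)]
  have hinv : lam ^ (-(1 : ℝ) / 2) = (lam ^ ((1 : ℝ) / 2))⁻¹ := by
    rw [neg_div, Real.rpow_neg (by positivity)]
  calc 9 ^ k * Real.exp (-(3 / 16) * lam)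
      ≤ Real.exp (11 / 5 * k) * Real.exp (-(3 / 16) * lam) := by gcongr; exact nine_pow_le_exp k
    _ ≤ Real.exp (-(lam / 480)) * Real.exp (-(1 / 480) * lam) := by
        rw [← Real.exp_add, ← Real.exp_add]; exact Real.exp_le_exp.2 (by linarith)
    _ ≤ 480 * lam ^ (-(1 : ℝ) / 2) * Real.exp (-(1 / 480) * lam) := by
        gcongr
        rw [hinv, Real.exp_neg, ← div_eq_mul_inv, le_div_iff₀ (by positivity),
          inv_mul_le_iff₀ (Real.exp_pos _), mul_comm]
        exact hsqrt

lemma rpow_neg_half_le_mul (d : ℕ) {ν lam : ℝ} (hν : 0 < ν) (hνlam : ν ≤ lam) :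
    lam ^ (-(1 : ℝ) / 2) ≤ ν ^ (-(d : ℝ) / 2) * lam ^ (((d : ℝ) + 1) / 2 - 1) := by
  have hlam := hν.trans_le hνlam
  rw [show -(1 : ℝ) / 2 = -(d : ℝ) / 2 + ((d + 1) / 2 - 1) by ring, Real.rpow_add hlam]
  refine mul_le_mul_of_nonneg_right (Real.rpow_le_rpow_of_nonpos hν hνlam ?_) (by positivity)
  linarith [d.cast_nonneg (α := ℝ)]

/-- Asymptotics of `χ̂_B` for `λ > 3ν`:
`χ̂_B(λ,k) = (−1)^k (sin λ/λ^{n+1}) 2^{(3n+1)/2}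
 (1 + O(ν^{−(n−1)/2} λ^{n/2−1} e^{−cλ}))`. -/
theorem chiHatB_large_lambda (n : ℕ) (hn : 1 ≤ n) :
    ∃ C > (0 : ℝ), ∃ c > (0 : ℝ), ∀ (k : ℕ) (lam : ℝ), 3 * (nuv n k : ℝ) < lam →
      |chiHatB n k lam -
          (-1) ^ k * (Real.sin lam / lam ^ (n + 1)) * (2 : ℝ) ^ ((3 * (n : ℝ) + 1) / 2)| ≤
        C * (|Real.sin lam| / lam ^ (n + 1)) * (nuv n k : ℝ) ^ (-((n : ℝ) - 1) / 2) *
          lam ^ ((n : ℝ) / 2 - 1) * Real.exp (-c * lam) := by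
  obtain ⟨d, rfl⟩ := Nat.exists_eq_add_of_le' hn
  refine ⟨8 / 3 * 2 ^ (((d : ℝ) + 2) / 2) * 8 ^ d * 480, by positivity, 1 / 480, by norm_num,
    fun k lam hlam => ?_⟩
  have hν : (nuv (d + 1) k : ℝ) = 4 * k + 2 * d + 2 := by simp only [nuv]; push_cast; ring
  have hk : (0 : ℝ) ≤ k := k.cast_nonneg
  have hd : (0 : ℝ) ≤ d := d.cast_nonneg
  have hlam0 : 0 < lam := by linarith
  push_cast
  rw [add_sub_cancel_right, show (3 * ((d : ℝ) + 1) + 1) / 2 = (3 * d + 4) / 2 by ring]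
  calc _ ≤ 8 / 3 * 2 ^ (((d : ℝ) + 2) / 2) * 8 ^ d * (|Real.sin lam| / lam ^ (d + 2)) *
        (9 ^ k * Real.exp (-(3 / 16) * lam)) := abs_chiHatB_sub_le d k hlam0
    _ ≤ 8 / 3 * 2 ^ (((d : ℝ) + 2) / 2) * 8 ^ d * (|Real.sin lam| / lam ^ (d + 2)) *
        (480 * lam ^ (-(1 : ℝ) / 2) * Real.exp (-(1 / 480) * lam)) :=
      mul_le_mul_of_nonneg_left (nine_pow_mul_exp_le (by linarith) (by linarith)) (by positivity)
    _ ≤ 8 / 3 * 2 ^ (((d : ℝ) + 2) / 2) * 8 ^ d * (|Real.sin lam| / lam ^ (d + 2)) *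
        (480 * ((nuv (d + 1) k : ℝ) ^ (-(d : ℝ) / 2) * lam ^ (((d : ℝ) + 1) / 2 - 1)) *
          Real.exp (-(1 / 480) * lam)) := by
      gcongr _ * (_ * ?_ * _)
      exact rpow_neg_half_le_mul d (by linarith) (by linarith)
    _ = _ := by ring
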